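/- Let Y¹,...,Y^m be càdlàg real processes on [0,T] indexed by J = {1,...,m}, τ a time, and C_τ(i,j) ≥ 0 costs satisfying the strict triangle condition inf(C(i,j)+C(j,l)−C(i,l)) > 0 for distinct i,j,l and C(i,i)=0. Suppose there is an index j₁ and indices j₂,...,j_p with j_p = j₁, p ≥ 2, such that Y^{j_k}_{τ⁻} = Y^{j_{k+1}}_{τ⁻} − C_τ(j_k, j_{k+1}) for k = 1,...,p−1. Then a contradiction follows; i.e., no such cycle of binding obstacle equalities can exist. -/
import Mathlib


/-- No cycle of binding obstacle equalities can exist: if the left limits of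
càdlàg processes `Y^i` at `τ` satisfy
`Y^{j_k}_{τ⁻} = Y^{j_{k+1}}_{τ⁻} − C_τ(j_k,j_{k+1})` along a cycle
`j_1,…,j_p = j_1` of distinct consecutive indices, the strict triangle
condition on the nonnegative costs yields a contradiction. -/
theorem no_binding_obstacle_cycle
    {m : ℕ} (Y : Fin m → ℝ → ℝ) (τ : ℝ)
    (C : ℝ → Fin m → Fin m → ℝ)
    (hnonneg : ∀ t i j, 0 ≤ C t i j)
    (hdiag : ∀ t i, C t i i = 0)
    (htri : ∀ i j l : Fin m, i ≠ j → j ≠ l →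
      ∃ ε > 0, ∀ t, ε ≤ C t i j + C t j l - C t i l)
    (p : ℕ) (hp : 2 ≤ p) (j : ℕ → Fin m) (hcycle : j p = j 1)
    (hdist : ∀ k, 1 ≤ k → k ≤ p - 1 → j k ≠ j (k + 1))
    (hbind : ∀ k, 1 ≤ k → k ≤ p - 1 →
      Function.leftLim (Y (j k)) τ
        = Function.leftLim (Y (j (k + 1))) τ - C τ (j k) (j (k + 1))) :
    False := by
  -- Case p = 2: the cycle condition contradicts distinctness directly.
  rcases Nat.lt_or_ge p 3 with h2 | h3
  · have hp2 : p = 2 := by omega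
    subst hp2
    exact hdist 1 le_rfl (by norm_num) hcycle.symm
  -- Case p ≥ 3.
  set L : ℕ → ℝ := fun k => Function.leftLim (Y (j k)) τ with hL
  have step : ∀ k, 1 ≤ k → k ≤ p - 1 → L k + C τ (j k) (j (k + 1)) = L (k + 1) := by
    intro k h1 h2
    have := hbind k h1 h2
    simp only [hL]
    linarith
  have mono : ∀ b, b ≤ p → ∀ a, 1 ≤ a → a ≤ b → L a ≤ L b := by
    intro b
    induction b with
    | zero => intro _ a h1 h2; omega
    | succ b ih =>
      intro hbp a h1 h2
      rcases Nat.lt_or_ge a (b + 1) with hlt | hge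
      · have hab : a ≤ b := by omega
        have h1b : 1 ≤ b := le_trans h1 hab
        have hb : L b + C τ (j b) (j (b + 1)) = L (b + 1) :=
          step b h1b (by omega)
        have := hnonneg τ (j b) (j (b + 1))
        have := ih (by omega) a h1 hab
        linarith
      · have : a = b + 1 := by omega
        subst this; exact le_rfl
  have h12 : L 1 + C τ (j 1) (j 2) = L 2 := step 1 le_rfl (by omega)
  have h23 : L 2 + C τ (j 2) (j 3) = L 3 := step 2 (by omega) (by omega)
  have h3p : L 3 ≤ L p := mono p le_rfl 3 (by norm_num) h3
  have hpL : L p = L 1 := by simp only [hL, hcycle]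
  have hn12 := hnonneg τ (j 1) (j 2)
  have hn23 := hnonneg τ (j 2) (j 3)
  have hc12 : C τ (j 1) (j 2) = 0 := by linarith
  have hc23 : C τ (j 2) (j 3) = 0 := by linarith
  obtain ⟨ε, hε, htr⟩ := htri (j 1) (j 2) (j 3)
    (hdist 1 le_rfl (by omega)) (hdist 2 (by omega) (by omega))
  have := htr τ
  have := hnonneg τ (j 1) (j 3)
  linarith
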